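/- arXiv:math/0406230 — 8 statements merged into one kernel-verified Lean document; each statement's English description precedes it below -/
import Mathlib

section
/- Let R be a suitable ring equipped with a nice topology, and suppose that every convergent limit of units of R is a unit (i.e., every element of the topological closure of the unit group U(R) is a unit). Then R is an ℵ₀-exchange ring. -/
/-!
Iterating the exchange property along the tails `t m = 1 - ∑_{k<m} x k` gives idempotents
`e m ∈ R x m` and `f m ∈ R t m` with `f 0 = 1`, such that `e m` and `f (m + 1)` are orthogonal and
`e m + f (m + 1)` generates the same right ideal as `f m`. Then `u m = 1 + e m + f (m + 1) - f m`
is a unit (the part after `1` squares to zero), and the products `u m ⋯ u (m + n - 1)` telescope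
to `1 + ∑_{k<n} (u m ⋯ u (m + k - 1)) e (m + k) + f (m + n) - f m`. Left multiple summability
and `f m → 0` make them converge to some `T m = u m T (m + 1)`, a limit of units and hence a unit.
The family `T (i + 1)⁻¹ e i` consists of orthogonal idempotents in `R x i` with partial sums
`T m⁻¹ (1 - f m) → 1`. A countable family reduces to an `ℕ`-indexed one by extending by zero.
-/

/-- A ring is *suitable* (equivalently, an exchange ring) if whenever `x + y = 1` there are
orthogonal idempotents `e ∈ Rx`, `f ∈ Ry` with `e + f = 1`. -/
def IsSuitableRing (R : Type*) [Ring R] : Prop :=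
  ∀ x y : R, x + y = 1 →
    ∃ e f : R, IsIdempotentElem e ∧ IsIdempotentElem f ∧
      (∃ r, e = r * x) ∧ (∃ s, f = s * y) ∧ e * f = 0 ∧ f * e = 0 ∧ e + f = 1
/-- A ring topology is *linear* if `0` has a neighborhood basis consisting of left ideals. -/
def HasLinearTopology (R : Type*) [Ring R] [TopologicalSpace R] : Prop :=
  ∀ U ∈ nhds (0 : R), ∃ I : Ideal R, (I : Set R) ∈ nhds (0 : R) ∧ (I : Set R) ⊆ U
/-- A topology on a ring is *nice* if it is linear, Hausdorff, and left multiple summable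
(for every summable family `(x i)` and every family `(r i)`, the family `(r i * x i)` is
summable).  Summability of a family means convergence of the net of finite partial sums,
i.e. `HasSum`/`Summable`. -/
structure IsNiceTopology (R : Type*) [Ring R] [TopologicalSpace R] : Prop where
  linear : HasLinearTopology R
  hausdorff : T2Space R
  leftMultipleSummable : ∀ {ι : Type*} (x r : ι → R), Summable x →
    Summable fun i => r i * x i
/-- `R` is an *ℵ₀-exchange ring*: every summable family indexed by a countable set and
summing to `1` refines to a summable family of pairwise orthogonal idempotents
`e i ∈ R * x i` summing to `1`. -/
def IsAleph0ExchangeRing (R : Type*) [Ring R] [TopologicalSpace R] : Prop :=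
  ∀ (ι : Type*) [Countable ι] (x : ι → R), HasSum x 1 →
    ∃ e : ι → R, Summable e ∧ (∀ i, IsIdempotentElem (e i)) ∧
      (∀ i j, i ≠ j → e i * e j = 0) ∧ (∀ i, ∃ r, e i = r * x i) ∧ HasSum e 1

open Finset Filter Topology

section

variable {R : Type*} [Ring R]

/-- The last two fields say that `e + e'` and `f` generate the same right ideal. -/
structure IsExchangeSplit (f e e' : R) : Prop where
  idem_fst : IsIdempotentElem e
  idem_snd : IsIdempotentElem e'
  fst_mul_snd : e * e' = 0
  snd_mul_fst : e' * e = 0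
  mul_add_eq : f * (e + e') = e + e'
  add_mul_eq : (e + e') * f = f

namespace IsExchangeSplit

variable {f e e' : R} (h : IsExchangeSplit f e e')
include h

theorem add_mul_fst : (e + e') * e = e := by
  rw [add_mul, h.idem_fst.eq, h.snd_mul_fst, add_zero]

theorem add_mul_snd : (e + e') * e' = e' := by
  rw [add_mul, h.idem_snd.eq, h.fst_mul_snd, zero_add]

theorem fst_mul_add : e * (e + e') = e := by
  rw [mul_add, h.idem_fst.eq, h.fst_mul_snd, add_zero]

theorem snd_mul_add : e' * (e + e') = e' := by
  rw [mul_add, h.idem_snd.eq, h.snd_mul_fst, zero_add]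

theorem mul_fst : f * e = e := by
  rw [← h.add_mul_fst, ← mul_assoc, h.mul_add_eq]

theorem mul_snd : f * e' = e' := by
  rw [← h.add_mul_snd, ← mul_assoc, h.mul_add_eq]

theorem idem_base : IsIdempotentElem f :=
  calc f * f = f * ((e + e') * f) := by rw [h.add_mul_eq]
    _ = f := by rw [← mul_assoc, h.mul_add_eq, h.add_mul_eq]

theorem add_sub_mul_self_eq_zero : (e + e' - f) * (e + e' - f) = 0 := by
  have hp : (e + e') * (e + e') = e + e' := by rw [mul_add, h.add_mul_fst, h.add_mul_snd]
  rw [sub_mul, mul_sub, mul_sub, hp, h.add_mul_eq, h.mul_add_eq, h.idem_base.eq]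
  abel

def unit : Rˣ where
  val := 1 + (e + e' - f)
  inv := 1 - (e + e' - f)
  val_inv := by rw [mul_sub, mul_one, add_mul, one_mul, h.add_sub_mul_self_eq_zero]; abel
  inv_val := by rw [mul_add, mul_one, sub_mul, one_mul, h.add_sub_mul_self_eq_zero]; abel

theorem val_unit : (h.unit : R) = 1 + (e + e' - f) := rfl

theorem val_inv_unit : ((h.unit⁻¹ : Rˣ) : R) = 1 - (e + e' - f) := rfl

theorem mul_unit_of_mul_eq_zero {y : R} (hy : y * f = 0) : y * h.unit = y := by
  have hyp : y * (e + e') = 0 := by rw [← h.mul_add_eq, ← mul_assoc, hy, zero_mul]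
  rw [val_unit, mul_add, mul_sub, hyp, hy, mul_one]
  abel

theorem unit_mul_of_snd_mul {y : R} (hy : e' * y = y) : h.unit * y = y := by
  have hpy : (e + e') * y = y := by rw [← hy, ← mul_assoc, h.add_mul_snd]
  have hfy : f * y = y := by rw [← hy, ← mul_assoc, h.mul_snd]
  rw [val_unit, add_mul, sub_mul, hpy, hfy, one_mul]
  abel

theorem fst_mul_unit_inv : e * ((h.unit⁻¹ : Rˣ) : R) = e * f := by
  rw [val_inv_unit, mul_sub, mul_sub, h.fst_mul_add, mul_one]
  abel

theorem snd_mul_unit_inv : e' * ((h.unit⁻¹ : Rˣ) : R) = e' * f := by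
  rw [val_inv_unit, mul_sub, mul_sub, h.snd_mul_add, mul_one]
  abel

theorem unit_inv_mul_one_sub_add :
    ((h.unit⁻¹ : Rˣ) : R) * (1 - f) + e = 1 - e' := by
  have hdf : (e + e' - f) * f = 0 := by rw [sub_mul, h.add_mul_eq, h.idem_base.eq, sub_self]
  rw [val_inv_unit, sub_mul, one_mul, mul_sub, mul_one, hdf]
  abel

end IsExchangeSplit

theorem IsIdempotentElem.mul_of_eq_mul {f g c : R} (hg : IsIdempotentElem g) (hfg : f * g = g)
    (hgc : g = c * f) : IsIdempotentElem (g * c) ∧ g * c * f = g := by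
  have hcg : c * g = g :=
    calc c * g = c * f * g := by rw [mul_assoc, hfg]
      _ = g := by rw [← hgc, hg.eq]
  refine ⟨?_, by rw [mul_assoc, ← hgc, hg.eq]⟩
  change g * c * (g * c) = g * c
  rw [mul_assoc, ← mul_assoc c, hcg, ← mul_assoc, hg.eq]

theorem IsIdempotentElem.units_inv_mul {e : R} {u : Rˣ} (he : IsIdempotentElem e)
    (heu : e * u = e) : IsIdempotentElem (((u⁻¹ : Rˣ) : R) * e) := by
  have : e * ((u⁻¹ : Rˣ) : R) = e := (Units.mul_inv_eq_iff_eq_mul _).mpr heu.symm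
  change ((u⁻¹ : Rˣ) : R) * e * (((u⁻¹ : Rˣ) : R) * e) = ((u⁻¹ : Rˣ) : R) * e
  rw [mul_assoc, ← mul_assoc e, this, he.eq]

namespace IsSuitableRing

variable (hR : IsSuitableRing R)
include hR

/-- The exchange property passes to the corner ring `fRf`. -/
theorem exists_corner_split {f a : R} (hf : IsIdempotentElem f) (haf : a * f = a) :
    ∃ g h : R, IsIdempotentElem g ∧ IsIdempotentElem h ∧ g * h = 0 ∧ h * g = 0 ∧ g + h = f ∧
      (∃ z, g = z * a) ∧ ∃ w, h = w * (f - a) := by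
  obtain ⟨E, F, -, hF, ⟨r, hE⟩, ⟨s, hFs⟩, -, -, hEF⟩ := hR (a + (1 - f)) (f - a) (by abel)
  have hFf : F * f = F := by rw [hFs, mul_assoc, sub_mul, hf.eq, haf]
  have hfFf : f * F * f = f * F := by rw [mul_assoc, hFf]
  have hfF : IsIdempotentElem (f * F) := by
    change f * F * (f * F) = f * F
    rw [← mul_assoc, hfFf, mul_assoc, hF.eq]
  have hfE : f - f * F = f * r * a :=
    calc f - f * F = f * E * f := by
          rw [eq_sub_of_add_eq hEF, mul_sub, mul_one, sub_mul, hf.eq, hfFf]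
      _ = f * r * a := by rw [hE, mul_assoc, mul_assoc, add_mul, sub_mul, one_mul, hf.eq, haf,
          sub_self, add_zero, mul_assoc]
  refine ⟨f - f * F, f * F, ?_, hfF, ?_, ?_, sub_add_cancel f _, ⟨f * r, hfE⟩,
    ⟨f * s, by rw [hFs, mul_assoc]⟩⟩
  · change (f - f * F) * (f - f * F) = f - f * F
    rw [sub_mul, mul_sub, mul_sub, hf.eq, ← mul_assoc, hf.eq, hfFf, hfF.eq]
    abel
  · rw [sub_mul, ← mul_assoc, hf.eq, hfF.eq, sub_self]
  · rw [mul_sub, hfFf, hfF.eq, sub_self]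

theorem exists_exchangeSplit {f a b s : R} (hf : IsIdempotentElem f) (hs : f = s * (a + b)) :
    ∃ e e' : R, IsExchangeSplit f e e' ∧ (∃ r, e = r * a) ∧ ∃ r, e' = r * b := by
  have haf : f * s * a * f * f = f * s * a * f := by rw [mul_assoc _ f f, hf.eq]
  have hsub : f - f * s * a * f = f * s * b * f := by
    have : f = f * s * a * f + f * s * b * f := by
      rw [← add_mul, ← mul_add, mul_assoc f s, ← hs, hf.eq, hf.eq]
    exact sub_eq_of_eq_add' this
  obtain ⟨g, h, hg, hh, hgh, hhg, hghf, ⟨z, hgz⟩, ⟨w, hhw⟩⟩ :=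
    hR.exists_corner_split hf haf
  have hfg : f * g = g := by rw [← hghf, add_mul, hg.eq, hhg, add_zero]
  have hfh : f * h = h := by rw [← hghf, add_mul, hh.eq, hgh, zero_add]
  obtain ⟨he, hegf⟩ := hg.mul_of_eq_mul hfg (c := z * f * s * a) (by rw [hgz]; noncomm_ring)
  obtain ⟨he', hehf⟩ :=
    hh.mul_of_eq_mul hfh (c := w * f * s * b) (by rw [hhw, hsub]; noncomm_ring)
  refine ⟨g * (z * f * s * a), h * (w * f * s * b), ⟨he, he', ?_, ?_, ?_, ?_⟩,
    ⟨g * (z * f * s), by noncomm_ring⟩, ⟨h * (w * f * s), by noncomm_ring⟩⟩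
  · calc g * (z * f * s * a) * (h * (w * f * s * b))
        = g * (z * f * s * a) * f * h * (w * f * s * b) := by
          rw [mul_assoc (g * (z * f * s * a)) f h, hfh]; simp only [mul_assoc]
      _ = 0 := by rw [hegf, hgh, zero_mul]
  · calc h * (w * f * s * b) * (g * (z * f * s * a))
        = h * (w * f * s * b) * f * g * (z * f * s * a) := by
          rw [mul_assoc (h * (w * f * s * b)) f g, hfg]; simp only [mul_assoc]
      _ = 0 := by rw [hehf, hhg, zero_mul]
  · rw [mul_add, ← mul_assoc, ← mul_assoc f h, hfg, hfh]
  · rw [add_mul, hegf, hehf, hghf]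

end IsSuitableRing

structure ExchangeChain (e f : ℕ → R) : Prop where
  base_zero : f 0 = 1
  split : ∀ m, IsExchangeSplit (f m) (e m) (f (m + 1))

theorem IsSuitableRing.exists_exchangeChain (hR : IsSuitableRing R) (x : ℕ → R) :
    ∃ e f : ℕ → R, ExchangeChain e f ∧ (∀ m, ∃ r, e m = r * x m) ∧
      ∀ m, ∃ r, f m = r * (1 - ∑ k ∈ range m, x k) := by
  set t : ℕ → R := fun m => 1 - ∑ k ∈ range m, x k
  have ht : ∀ m, t m = x m + t (m + 1) := fun m => by simp only [t, sum_range_succ]; abel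
  -- The invariant is a premise inside the existential, so that `choose` gives a total step map.
  have step : ∀ m (f : R), ∃ p : R × R, IsIdempotentElem f ∧ (∃ s, f = s * t m) →
      IsExchangeSplit f p.1 p.2 ∧ (∃ r, p.1 = r * x m) ∧ ∃ r, p.2 = r * t (m + 1) := by
    intro m f
    by_cases hf : IsIdempotentElem f ∧ ∃ s, f = s * t m
    · obtain ⟨s, hs⟩ := hf.2
      obtain ⟨e, e', h⟩ := hR.exists_exchangeSplit hf.1 (hs.trans (by rw [ht]))
      exact ⟨(e, e'), fun _ => h⟩
    · exact ⟨0, fun h => absurd h hf⟩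
  choose next hnext using step
  let f : ℕ → R := fun m => Nat.rec 1 (fun m fm => (next m fm).2) m
  have hf : ∀ m, IsIdempotentElem (f m) ∧ ∃ s, f m = s * t m := by
    intro m
    induction m with
    | zero => exact ⟨IsIdempotentElem.one, 1, by simp [f, t]⟩
    | succ m ih =>
      obtain ⟨h, -, hr⟩ := hnext m (f m) ih
      exact ⟨h.idem_snd, hr⟩
  exact ⟨fun m => (next m (f m)).1, f, ⟨rfl, fun m => (hnext m (f m) (hf m)).1⟩,
    fun m => (hnext m (f m) (hf m)).2.1, fun m => (hf m).2⟩

namespace ExchangeChain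

variable {e f : ℕ → R} (hc : ExchangeChain e f)
include hc

theorem base_mul_base_of_le {j L : ℕ} (h : j ≤ L) : f j * f L = f L := by
  induction h with
  | refl => exact (hc.split j).idem_base.eq
  | step _ ih => rw [← (hc.split _).mul_snd, ← mul_assoc, ih]

theorem fst_mul_base_of_lt {i L : ℕ} (h : i < L) : e i * f L = 0 := by
  rw [← hc.base_mul_base_of_le h, ← mul_assoc, (hc.split i).fst_mul_snd, zero_mul]

theorem fst_mul_fst_of_lt {i k : ℕ} (h : i < k) : e i * e k = 0 := by
  rw [← (hc.split k).mul_fst, ← mul_assoc, hc.fst_mul_base_of_lt h, zero_mul]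

def unit (m : ℕ) : Rˣ := (hc.split m).unit

def prodUnits (m : ℕ) : ℕ → Rˣ
  | 0 => 1
  | n + 1 => prodUnits m n * hc.unit (m + n)

theorem prodUnits_succ' (m n : ℕ) :
    hc.prodUnits m (n + 1) = hc.unit m * hc.prodUnits (m + 1) n := by
  induction n with
  | zero => simp [prodUnits]
  | succ n ih =>
    rw [prodUnits, ih, prodUnits, mul_assoc, Nat.add_right_comm, add_assoc]

theorem fst_mul_prodUnits {i m : ℕ} (h : i < m) (n : ℕ) : e i * hc.prodUnits m n = e i := by
  induction n with
  | zero => simp [prodUnits]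
  | succ n ih =>
    rw [prodUnits, Units.val_mul, ← mul_assoc, ih]
    exact (hc.split _).mul_unit_of_mul_eq_zero (hc.fst_mul_base_of_lt (by omega))

theorem prodUnits_mul_base {m n L : ℕ} (h : m + n ≤ L) : hc.prodUnits m n * f L = f L := by
  induction n with
  | zero => simp [prodUnits]
  | succ n ih =>
    rw [prodUnits, Units.val_mul, mul_assoc, unit,
      (hc.split _).unit_mul_of_snd_mul (hc.base_mul_base_of_le (by omega)), ih (by omega)]

theorem val_prodUnits (m n : ℕ) :
    (hc.prodUnits m n : R) =
      1 + ∑ k ∈ range n, hc.prodUnits m k * e (m + k) + f (m + n) - f m := by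
  induction n with
  | zero => simp [prodUnits]
  | succ n ih =>
    have h₁ := hc.prodUnits_mul_base (m := m) (n := n) le_rfl
    have h₂ := hc.prodUnits_mul_base (m := m) (n := n) (L := m + n + 1) (by omega)
    rw [prodUnits, Units.val_mul, unit, IsExchangeSplit.val_unit, sum_range_succ,
      ← add_assoc m n 1]
    calc (hc.prodUnits m n : R) * (1 + (e (m + n) + f (m + n + 1) - f (m + n)))
        = hc.prodUnits m n + hc.prodUnits m n * e (m + n) + hc.prodUnits m n * f (m + n + 1)
          - hc.prodUnits m n * f (m + n) := by noncomm_ring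
      _ = _ := by
        rw [h₁, h₂]
        nth_rw 1 [ih]
        abel

section TailUnits

variable {w : ℕ → Rˣ} (hw : ∀ m, w m = hc.unit m * w (m + 1))
include hw

theorem val_inv_eq (m : ℕ) :
    (((w m)⁻¹ : Rˣ) : R) = ((w (m + 1))⁻¹ : Rˣ) * ((hc.unit m)⁻¹ : Rˣ) := by
  rw [hw m, mul_inv_rev, Units.val_mul]

theorem sum_inv_mul_fst (m : ℕ) :
    ∑ i ∈ range m, ((w (i + 1))⁻¹ : Rˣ) * e i = ((w m)⁻¹ : Rˣ) * (1 - f m) := by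
  induction m with
  | zero => rw [sum_range_zero, hc.base_zero, sub_self, mul_zero]
  | succ m ih =>
    rw [sum_range_succ, ih, hc.val_inv_eq hw, mul_assoc, ← mul_add]
    exact congrArg _ (hc.split m).unit_inv_mul_one_sub_add

variable (hwe : ∀ i m, i < m → e i * w m = e i)
include hwe

theorem exists_fst_mul_inv_eq_mul_base (k n : ℕ) :
    ∃ z, e (k + n) * ((w k)⁻¹ : Rˣ) = z * f k := by
  induction n generalizing k with
  | zero =>
    refine ⟨e k, ?_⟩
    rw [add_zero, hc.val_inv_eq hw, ← mul_assoc,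
      (Units.mul_inv_eq_iff_eq_mul _).mpr (hwe k _ k.lt_succ_self).symm]
    exact (hc.split k).fst_mul_unit_inv
  | succ n ih =>
    obtain ⟨z, hz⟩ := ih (k + 1)
    refine ⟨z * f (k + 1), ?_⟩
    rw [hc.val_inv_eq hw, ← mul_assoc, show k + (n + 1) = k + 1 + n by omega, hz, mul_assoc,
      mul_assoc]
    exact congrArg (z * ·) (hc.split k).snd_mul_unit_inv

theorem inv_mul_fst_mul_inv_mul_fst {i j : ℕ} (hij : i ≠ j) :
    ((w (i + 1))⁻¹ : Rˣ) * e i * (((w (j + 1))⁻¹ : Rˣ) * e j) = 0 := by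
  rcases hij.lt_or_gt with h | h
  · rw [mul_assoc, ← mul_assoc (e i),
      (Units.mul_inv_eq_iff_eq_mul _).mpr (hwe i (j + 1) (by omega)).symm,
      hc.fst_mul_fst_of_lt h, mul_zero]
  · obtain ⟨z, hz⟩ := hc.exists_fst_mul_inv_eq_mul_base hw hwe (j + 1) (i - (j + 1))
    rw [Nat.add_sub_cancel' h] at hz
    rw [mul_assoc, ← mul_assoc (e i), hz, mul_assoc, (hc.split j).snd_mul_fst, mul_zero,
      mul_zero]

end TailUnits

end ExchangeChain

section Topology

variable [TopologicalSpace R]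

theorem HasLinearTopology.isLinearTopology (h : HasLinearTopology R) : IsLinearTopology R R := by
  refine isLinearTopology_iff_hasBasis_ideal.mpr ⟨fun t => ⟨h t, ?_⟩⟩
  rintro ⟨I, hI, hIt⟩
  exact mem_of_superset hI hIt

theorem IsNiceTopology.summable_mul_left (h : IsNiceTopology R) {x : ℕ → R} (hx : Summable x)
    (r : ℕ → R) : Summable fun i => r i * x i :=
  Equiv.ulift.summable_iff.mp <|
    h.leftMultipleSummable (x ∘ Equiv.ulift) (r ∘ Equiv.ulift) (Equiv.ulift.summable_iff.mpr hx)

variable [IsTopologicalRing R] [IsLinearTopology R R]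

theorem HasSum.tendsto_mul_of_eq_mul_tail {x f d : ℕ → R} (hx : HasSum x 1)
    (hfd : ∀ m, f m = d m * (1 - ∑ k ∈ range m, x k)) (a : ℕ → R) :
    Tendsto (fun m => a m * f m) atTop (𝓝 0) := by
  simp_rw [hfd, ← mul_assoc]
  exact IsLinearTopology.tendsto_mul_zero_of_right _ _ <| by
    simpa using (tendsto_const_nhds (x := (1 : R))).sub hx.tendsto_sum_nat

/-- The tails lie in every open ideal, which is closed; no summability is needed since the `tsum`
of a non-summable family is `0`. -/
theorem tendsto_tsum_mul_add_zero {x : ℕ → R} (hx : Tendsto x atTop (𝓝 0)) (r : ℕ → ℕ → R) :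
    Tendsto (fun m => ∑' k, r m k * x (m + k)) atTop (𝓝 0) := by
  refine IsLinearTopology.hasBasis_open_ideal.tendsto_right_iff.mpr fun I hI => ?_
  have hIc : IsClosed (I : Set R) := I.toAddSubgroup.isClosed_of_isOpen hI
  obtain ⟨N, hN⟩ := eventually_atTop.mp (hx (hI.mem_nhds I.zero_mem))
  filter_upwards [eventually_ge_atTop N] with m hm
  exact tsum_mem hIc fun k => I.mul_mem_left _ (hN _ (by omega))

theorem tendsto_val_inv_of_tendsto_one {ι : Type*} {l : Filter ι} {u : ι → Rˣ}
    (hu : Tendsto (fun n => (u n : R)) l (𝓝 1)) :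
    Tendsto (fun n => (((u n)⁻¹ : Rˣ) : R)) l (𝓝 1) := by
  have h : Tendsto (fun n => ((u n)⁻¹ : Rˣ) * (1 - u n : R)) l (𝓝 0) :=
    IsLinearTopology.tendsto_mul_zero_of_right _ _ <| by
      simpa using (tendsto_const_nhds (x := (1 : R))).sub hu
  simpa [mul_sub] using h.add_const 1

end Topology

namespace ExchangeChain

variable [TopologicalSpace R] {e f : ℕ → R} (hc : ExchangeChain e f)

/-- The infinite product `u m * u (m + 1) * ⋯`, in the closed form given by `val_prodUnits`. -/
noncomputable def tailProd (m : ℕ) : R := 1 + ∑' k, (hc.prodUnits m k : R) * e (m + k) - f m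

variable [IsTopologicalRing R] {x : ℕ → R} {c d : ℕ → R}

theorem summable_prodUnits_mul (hec : ∀ m, e m = c m * x m)
    (hmul : ∀ r : ℕ → R, Summable fun k => r k * x k) (m : ℕ) :
    Summable fun k => (hc.prodUnits m k : R) * e (m + k) := by
  refine ((summable_nat_add_iff m).mpr
    (hmul fun k => (hc.prodUnits m (k - m) : R) * c k)).congr fun k => ?_
  rw [Nat.add_sub_cancel, add_comm, hec, mul_assoc]

variable [IsLinearTopology R R]

theorem tendsto_prodUnits (hx : HasSum x 1) (hec : ∀ m, e m = c m * x m)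
    (hfd : ∀ m, f m = d m * (1 - ∑ k ∈ range m, x k))
    (hmul : ∀ r : ℕ → R, Summable fun k => r k * x k) (m : ℕ) :
    Tendsto (fun n => (hc.prodUnits m n : R)) atTop (𝓝 (hc.tailProd m)) := by
  have hf : Tendsto (fun n => f (m + n)) atTop (𝓝 0) := by
    simp_rw [add_comm m]
    exact (tendsto_add_atTop_iff_nat m).mpr (by simpa using hx.tendsto_mul_of_eq_mul_tail hfd 1)
  have h := (((tendsto_const_nhds (x := (1 : R))).add
    (hc.summable_prodUnits_mul hec hmul m).hasSum.tendsto_sum_nat).add hf).sub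
    (tendsto_const_nhds (x := f m))
  rw [add_zero] at h
  exact h.congr fun n => (hc.val_prodUnits m n).symm

theorem tailProd_mem_closure (hx : HasSum x 1) (hec : ∀ m, e m = c m * x m)
    (hfd : ∀ m, f m = d m * (1 - ∑ k ∈ range m, x k))
    (hmul : ∀ r : ℕ → R, Summable fun k => r k * x k) (m : ℕ) :
    hc.tailProd m ∈ closure {u : R | IsUnit u} :=
  mem_closure_of_tendsto (hc.tendsto_prodUnits hx hec hfd hmul m)
    (Eventually.of_forall fun n => (hc.prodUnits m n).isUnit)

theorem tendsto_tailProd (hx : HasSum x 1) (hec : ∀ m, e m = c m * x m)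
    (hfd : ∀ m, f m = d m * (1 - ∑ k ∈ range m, x k)) :
    Tendsto hc.tailProd atTop (𝓝 1) := by
  have hs : Tendsto (fun m => ∑' k, (hc.prodUnits m k : R) * e (m + k)) atTop (𝓝 0) := by
    simpa only [hec, mul_assoc] using tendsto_tsum_mul_add_zero hx.summable.tendsto_atTop_zero
      fun m k => (hc.prodUnits m k : R) * c (m + k)
  have h := (hs.sub (by simpa using hx.tendsto_mul_of_eq_mul_tail hfd 1)).const_add 1
  rw [sub_zero, add_zero] at h
  exact h.congr fun m => (add_sub_assoc _ _ _).symm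

variable [T2Space R]

theorem tailProd_eq_unit_mul (hx : HasSum x 1) (hec : ∀ m, e m = c m * x m)
    (hfd : ∀ m, f m = d m * (1 - ∑ k ∈ range m, x k))
    (hmul : ∀ r : ℕ → R, Summable fun k => r k * x k) (m : ℕ) :
    hc.tailProd m = hc.unit m * hc.tailProd (m + 1) :=
  tendsto_nhds_unique ((tendsto_add_atTop_iff_nat 1).mpr (hc.tendsto_prodUnits hx hec hfd hmul m))
    (by simpa only [prodUnits_succ', Units.val_mul] using
      (hc.tendsto_prodUnits hx hec hfd hmul (m + 1)).const_mul (hc.unit m : R))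

theorem fst_mul_tailProd (hx : HasSum x 1) (hec : ∀ m, e m = c m * x m)
    (hfd : ∀ m, f m = d m * (1 - ∑ k ∈ range m, x k))
    (hmul : ∀ r : ℕ → R, Summable fun k => r k * x k) {i m : ℕ} (h : i < m) :
    e i * hc.tailProd m = e i :=
  tendsto_nhds_unique ((hc.tendsto_prodUnits hx hec hfd hmul m).const_mul (e i))
    (by simpa only [hc.fst_mul_prodUnits h] using tendsto_const_nhds)

end ExchangeChain

section Refinement

variable [TopologicalSpace R]

def IsExchangeRefinement {ι : Type*} (x e : ι → R) : Prop :=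
  Summable e ∧ (∀ i, IsIdempotentElem (e i)) ∧ (∀ i j, i ≠ j → e i * e j = 0) ∧
    (∀ i, ∃ r, e i = r * x i) ∧ HasSum e 1

theorem IsExchangeRefinement.comp_of_extend {ι κ : Type*} {x : ι → R} {j : ι → κ}
    (hj : Function.Injective j) {e : κ → R} (he : IsExchangeRefinement (Function.extend j x 0) e) :
    IsExchangeRefinement x (e ∘ j) := by
  obtain ⟨-, hidem, horth, hmem, hsum⟩ := he
  have hzero : ∀ k ∉ Set.range j, e k = 0 := fun k hk => by
    obtain ⟨r, hr⟩ := hmem k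
    rw [hr, Function.extend_apply' _ _ _ fun ⟨i, hi⟩ => hk ⟨i, hi⟩, Pi.zero_apply, mul_zero]
  have hsum' : HasSum (e ∘ j) 1 := (hj.hasSum_iff hzero).mpr hsum
  refine ⟨hsum'.summable, fun i => hidem _, fun i i' h => horth _ _ (hj.ne h), fun i => ?_, hsum'⟩
  obtain ⟨r, hr⟩ := hmem (j i)
  exact ⟨r, by rw [Function.comp_apply, hr, hj.extend_apply]⟩

variable [IsTopologicalRing R] [IsLinearTopology R R] [T2Space R]

theorem IsSuitableRing.exists_isExchangeRefinement_nat (hR : IsSuitableRing R)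
    (hunits : ∀ w ∈ closure {u : R | IsUnit u}, IsUnit w) {x : ℕ → R} (hx : HasSum x 1)
    (hmul : ∀ r : ℕ → R, Summable fun k => r k * x k) :
    ∃ e : ℕ → R, IsExchangeRefinement x e := by
  obtain ⟨e, f, hc, he, hf⟩ := hR.exists_exchangeChain x
  choose c hec using he
  choose d hfd using hf
  let w : ℕ → Rˣ := fun m => (hunits _ (hc.tailProd_mem_closure hx hec hfd hmul m)).unit
  have hw : ∀ m, w m = hc.unit m * w (m + 1) := fun m =>
    Units.ext (hc.tailProd_eq_unit_mul hx hec hfd hmul m)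
  have hwe : ∀ i m, i < m → e i * w m = e i := fun i m h => hc.fst_mul_tailProd hx hec hfd hmul h
  have hwinv : Tendsto (fun m => (((w m)⁻¹ : Rˣ) : R)) atTop (𝓝 1) :=
    tendsto_val_inv_of_tendsto_one (hc.tendsto_tailProd hx hec hfd)
  have hsummable : Summable fun i => ((w (i + 1))⁻¹ : Rˣ) * e i := by
    simpa only [hec, mul_assoc] using hmul fun i => ((w (i + 1))⁻¹ : Rˣ) * c i
  refine ⟨fun i => ((w (i + 1))⁻¹ : Rˣ) * e i, hsummable,
    fun i => (hc.split i).idem_fst.units_inv_mul (hwe i (i + 1) i.lt_succ_self),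
    fun i j hij => hc.inv_mul_fst_mul_inv_mul_fst hw hwe hij,
    fun i => ⟨((w (i + 1))⁻¹ : Rˣ) * c i, by simp only [hec, ← mul_assoc]⟩,
    hsummable.hasSum_iff_tendsto_nat.mpr ?_⟩
  have h := hwinv.sub (hx.tendsto_mul_of_eq_mul_tail hfd fun m => (((w m)⁻¹ : Rˣ) : R))
  rw [sub_zero] at h
  exact h.congr fun m => by rw [hc.sum_inv_mul_fst hw, mul_sub, mul_one]

end Refinement

end

/-- A suitable ring with a nice topology, in which every convergent limit
of units is a unit (i.e. every element of the closure of the unit group is a unit), is an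
ℵ₀-exchange ring. -/
theorem suitable_nice_limitsOfUnits_isAleph0ExchangeRing
    (R : Type*) [Ring R] [TopologicalSpace R] [IsTopologicalRing R]
    (hsuit : IsSuitableRing R) (hnice : IsNiceTopology R)
    (hunits : ∀ w ∈ closure {u : R | IsUnit u}, IsUnit w) :
    IsAleph0ExchangeRing R := by
  intro ι _ x hx
  have := hnice.hausdorff
  have := hnice.linear.isLinearTopology
  obtain ⟨j, hj⟩ := Countable.exists_injective_nat ι
  have hx' : HasSum (Function.extend j x 0) 1 := (hasSum_extend_zero hj).mpr hx
  obtain ⟨e, he⟩ := hsuit.exists_isExchangeRefinement_nat hunits hx'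
    (hnice.summable_mul_left hx'.summable)
  exact ⟨e ∘ j, he.comp_of_extend hj⟩
end

section
/- Let R be a suitable ring and let x₁ + x₂ + x₃ = 1 be an equation in R with x₁ an idempotent. Then there exist pairwise orthogonal idempotents e₁ ∈ Rx₁, e₂ ∈ Rx₂, and e₃ ∈ Rx₃ such that e₁ + e₂ + e₃ = 1 and x₁ is left strongly isomorphic to e₁ (that is, e₁x₁ = e₁ and x₁e₁ = x₁). -/
/-- Lemma 2. In a suitable ring, if `x₁ + x₂ + x₃ = 1` with `x₁`
idempotent, then there are pairwise orthogonal idempotents `eᵢ ∈ Rxᵢ` summing to `1`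
with `x₁` left strongly isomorphic to `e₁` (`e₁x₁ = e₁` and `x₁e₁ = x₁`). -/
theorem suitable_three_term_refinement
    (R : Type*) [Ring R] (hsuit : IsSuitableRing R)
    (x₁ x₂ x₃ : R) (hsum : x₁ + x₂ + x₃ = 1) (hx₁ : IsIdempotentElem x₁) :
    ∃ e₁ e₂ e₃ : R,
      IsIdempotentElem e₁ ∧ IsIdempotentElem e₂ ∧ IsIdempotentElem e₃ ∧
      (∃ r, e₁ = r * x₁) ∧ (∃ r, e₂ = r * x₂) ∧ (∃ r, e₃ = r * x₃) ∧
      e₁ * e₂ = 0 ∧ e₂ * e₁ = 0 ∧ e₁ * e₃ = 0 ∧ e₃ * e₁ = 0 ∧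
      e₂ * e₃ = 0 ∧ e₃ * e₂ = 0 ∧
      e₁ + e₂ + e₃ = 1 ∧ e₁ * x₁ = e₁ ∧ x₁ * e₁ = x₁ := by
  have hx : x₁ * x₁ = x₁ := hx₁
  obtain ⟨f, hfd⟩ : ∃ f : R, f = 1 - x₁ := ⟨_, rfl⟩
  have hff : f * f = f := by
    rw [hfd]; linear_combination (norm := noncomm_ring) hx
  have hfx : f * x₁ = 0 := by
    rw [hfd]; linear_combination (norm := noncomm_ring) (-1 : R) * hx
  have hxf : x₁ * f = 0 := by
    rw [hfd]; linear_combination (norm := noncomm_ring) (-1 : R) * hx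
  have hsum2 : (f * x₂ * f + x₁) + f * x₃ * f = 1 := by
    have h23 : f * (x₂ + x₃) * f = f := by
      have : x₂ + x₃ = f := by rw [hfd]; linear_combination (norm := noncomm_ring) hsum
      rw [this, hff, hff]
    have h1 : f + x₁ = 1 := by rw [hfd]; noncomm_ring
    linear_combination (norm := noncomm_ring) h23 + h1
  obtain ⟨g, h, hg, hh, ⟨r, hgr⟩, ⟨s, hhs⟩, hgh, hhg, hghs⟩ :=
    hsuit (f * x₂ * f + x₁) (f * x₃ * f) hsum2
  have hh' : h * h = h := hh
  have hhf : h * f = h := by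
    rw [hhs]
    calc s * (f * x₃ * f) * f = s * (f * x₃ * (f * f)) := by noncomm_ring
    _ = s * (f * x₃ * f) := by rw [hff]
  have hgform : g = 1 - h := by linear_combination (norm := noncomm_ring) hghs
  -- corner idempotents E₂, E₃ with E₂ + E₃ = f
  obtain ⟨E₃, hE₃⟩ : ∃ E : R, E = f * h := ⟨_, rfl⟩
  obtain ⟨E₂, hE₂⟩ : ∃ E : R, E = f - f * h := ⟨_, rfl⟩
  have hE₂f : E₂ * f = E₂ := by
    rw [hE₂]; linear_combination (norm := noncomm_ring) hff - f * hhf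
  have hE₃f : E₃ * f = E₃ := by
    rw [hE₃]; linear_combination (norm := noncomm_ring) f * hhf
  have hfE₂ : f * E₂ = E₂ := by
    rw [hE₂]; linear_combination (norm := noncomm_ring) hff - hff * h
  have hfE₃ : f * E₃ = E₃ := by
    rw [hE₃]; linear_combination (norm := noncomm_ring) hff * h
  have hE₃idem : E₃ * E₃ = E₃ := by
    rw [hE₃]; linear_combination (norm := noncomm_ring) f * hhf * h + f * hh'
  have hE₂E₃ : E₂ * E₃ = 0 := by
    rw [hE₂, hE₃]
    linear_combination (norm := noncomm_ring) hff * h - f * hhf * h - f * hh'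
  have hE₃E₂ : E₃ * E₂ = 0 := by
    rw [hE₂, hE₃]
    linear_combination (norm := noncomm_ring) f * hhf - f * hhf * h - f * hh'
  have hE₂idem : E₂ * E₂ = E₂ := by
    have : E₂ * E₂ = E₂ * f - E₂ * E₃ := by
      rw [hE₂, hE₃]; noncomm_ring
    rw [this, hE₂f, hE₂E₃, sub_zero]
  have hE₂sum : E₂ + E₃ = f := by rw [hE₂, hE₃]; noncomm_ring
  -- the b's
  obtain ⟨b₂, hb₂⟩ : ∃ b : R, b = f * r * f * x₂ := ⟨_, rfl⟩
  obtain ⟨b₃, hb₃⟩ : ∃ b : R, b = f * s * f * x₃ := ⟨_, rfl⟩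
  have hb₂f : b₂ * f = E₂ := by
    have h1 : f * g * f = b₂ * f := by
      rw [hgr, hb₂]
      calc f * (r * (f * x₂ * f + x₁)) * f
          = f * r * f * x₂ * (f * f) + f * r * (x₁ * f) := by noncomm_ring
      _ = f * r * f * x₂ * f := by rw [hff, hxf]; noncomm_ring
    have h2 : f * g * f = E₂ := by
      rw [hgform, hE₂]
      linear_combination (norm := noncomm_ring) hff - f * hhf
    rw [← h1, h2]
  have hb₃f : b₃ * f = E₃ := by
    rw [hb₃, hE₃, hhs]; noncomm_ring
  -- mixed products
  have hb₂E₂ : b₂ * E₂ = E₂ := by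
    calc b₂ * E₂ = b₂ * (f * E₂) := by rw [hfE₂]
    _ = b₂ * f * E₂ := by noncomm_ring
    _ = E₂ * E₂ := by rw [hb₂f]
    _ = E₂ := hE₂idem
  have hb₂E₃ : b₂ * E₃ = 0 := by
    calc b₂ * E₃ = b₂ * (f * E₃) := by rw [hfE₃]
    _ = b₂ * f * E₃ := by noncomm_ring
    _ = E₂ * E₃ := by rw [hb₂f]
    _ = 0 := hE₂E₃
  have hb₃E₂ : b₃ * E₂ = 0 := by
    calc b₃ * E₂ = b₃ * (f * E₂) := by rw [hfE₂]
    _ = b₃ * f * E₂ := by noncomm_ring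
    _ = E₃ * E₂ := by rw [hb₃f]
    _ = 0 := hE₃E₂
  have hb₃E₃ : b₃ * E₃ = E₃ := by
    calc b₃ * E₃ = b₃ * (f * E₃) := by rw [hfE₃]
    _ = b₃ * f * E₃ := by noncomm_ring
    _ = E₃ * E₃ := by rw [hb₃f]
    _ = E₃ := hE₃idem
  -- the final idempotents
  obtain ⟨e₂, he₂⟩ : ∃ e : R, e = E₂ * b₂ := ⟨_, rfl⟩
  obtain ⟨e₃, he₃⟩ : ∃ e : R, e = E₃ * b₃ := ⟨_, rfl⟩
  have he₂idem : e₂ * e₂ = e₂ := by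
    rw [he₂]; linear_combination (norm := noncomm_ring) E₂ * hb₂E₂ * b₂ + hE₂idem * b₂
  have he₃idem : e₃ * e₃ = e₃ := by
    rw [he₃]; linear_combination (norm := noncomm_ring) E₃ * hb₃E₃ * b₃ + hE₃idem * b₃
  have he₂e₃ : e₂ * e₃ = 0 := by
    rw [he₂, he₃]; linear_combination (norm := noncomm_ring) E₂ * hb₂E₃ * b₃
  have he₃e₂ : e₃ * e₂ = 0 := by
    rw [he₂, he₃]; linear_combination (norm := noncomm_ring) E₃ * hb₃E₂ * b₂
  have he₂f : e₂ * f = E₂ := by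
    rw [he₂]; linear_combination (norm := noncomm_ring) E₂ * hb₂f + hE₂idem
  have he₃f : e₃ * f = E₃ := by
    rw [he₃]; linear_combination (norm := noncomm_ring) E₃ * hb₃f + hE₃idem
  have hfe₂ : f * e₂ = e₂ := by
    rw [he₂]; linear_combination (norm := noncomm_ring) hfE₂ * b₂
  have hfe₃ : f * e₃ = e₃ := by
    rw [he₃]; linear_combination (norm := noncomm_ring) hfE₃ * b₃
  have hx₁e₂ : x₁ * e₂ = 0 := by
    calc x₁ * e₂ = x₁ * (f * e₂) := by rw [hfe₂]
    _ = (x₁ * f) * e₂ := by noncomm_ring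
    _ = 0 := by rw [hxf]; noncomm_ring
  have hx₁e₃ : x₁ * e₃ = 0 := by
    calc x₁ * e₃ = x₁ * (f * e₃) := by rw [hfe₃]
    _ = (x₁ * f) * e₃ := by noncomm_ring
    _ = 0 := by rw [hxf]; noncomm_ring
  have he₂x₁ : e₂ * x₁ = e₂ - E₂ := by
    have : e₂ * x₁ = e₂ * 1 - e₂ * f := by rw [hfd]; noncomm_ring
    rw [this, he₂f, mul_one]
  have he₃x₁ : e₃ * x₁ = e₃ - E₃ := by
    have : e₃ * x₁ = e₃ * 1 - e₃ * f := by rw [hfd]; noncomm_ring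
    rw [this, he₃f, mul_one]
  -- e₁
  obtain ⟨e₁, he₁⟩ : ∃ e : R, e = 1 - e₂ - e₃ := ⟨_, rfl⟩
  have he₁idem : e₁ * e₁ = e₁ := by
    rw [he₁]
    linear_combination (norm := noncomm_ring) he₂idem + he₃idem + he₂e₃ + he₃e₂
  have he₁e₂ : e₁ * e₂ = 0 := by
    rw [he₁]; linear_combination (norm := noncomm_ring) (-1 : R) * he₂idem - he₃e₂
  have he₂e₁ : e₂ * e₁ = 0 := by
    rw [he₁]; linear_combination (norm := noncomm_ring) (-1 : R) * he₂idem - he₂e₃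
  have he₁e₃ : e₁ * e₃ = 0 := by
    rw [he₁]; linear_combination (norm := noncomm_ring) (-1 : R) * he₃idem - he₂e₃
  have he₃e₁ : e₃ * e₁ = 0 := by
    rw [he₁]; linear_combination (norm := noncomm_ring) (-1 : R) * he₃idem - he₃e₂
  have he₁x₁ : e₁ * x₁ = e₁ := by
    rw [he₁]
    linear_combination (norm := noncomm_ring)
      (-1 : R) * he₂x₁ - he₃x₁ + hE₂sum + hfd
  have hx₁e₁ : x₁ * e₁ = x₁ := by
    rw [he₁]
    linear_combination (norm := noncomm_ring) (-1 : R) * hx₁e₂ - hx₁e₃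
  refine ⟨e₁, e₂, e₃, he₁idem, he₂idem, he₃idem,
    ⟨e₁, he₁x₁.symm⟩,
    ⟨E₂ * (f * r * f), by rw [he₂, hb₂]; noncomm_ring⟩,
    ⟨E₃ * (f * s * f), by rw [he₃, hb₃]; noncomm_ring⟩,
    he₁e₂, he₂e₁, he₁e₃, he₃e₁, he₂e₃, he₃e₂,
    by rw [he₁]; noncomm_ring, he₁x₁, hx₁e₁⟩
end

section
/- Let e and e' be idempotents in a ring R with e ∼ e' (i.e., e'e = e' and ee' = e), and assume R carries a linear, Hausdorff ring topology. Assume e = ∑_{i∈I} g_i where (g_i)_{i∈I} is a summable family of pairwise orthogonal idempotents. Then (e'g_i)_{i∈I} is a summable family of pairwise orthogonal idempotents with g_i ∼ e'g_i for each i. Further, if u ∈ R satisfies e' = ue, then e'g_i = ug_i for each i. Finally, if f is any idempotent with ef = fe = 0, then fg_i = g_if = 0 for each i. -/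
section Semigroup

variable {M : Type*} [Semigroup M] {a b : M}

theorem mul_mul_mul_eq_of_mul_eq_self (h : a * b = a) (c : M) :
    b * a * (b * c) = b * (a * c) := by
  rw [mul_assoc, ← mul_assoc a, h]

theorem IsIdempotentElem.mul_left_of_mul_eq_self (ha : IsIdempotentElem a) (h : a * b = a) :
    IsIdempotentElem (b * a) := by
  rw [IsIdempotentElem, mul_mul_mul_eq_of_mul_eq_self h, ha.eq]

end Semigroup

namespace HasSum

variable {R ι : Type*} [Semiring R] [TopologicalSpace R] [IsTopologicalSemiring R] [T2Space R]
  {g : ι → R} {e : R}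

theorem summand_mul_eq_self (hsum : HasSum g e) (hg : ∀ i, IsIdempotentElem (g i))
    (horth : ∀ i j, i ≠ j → g i * g j = 0) (i : ι) : g i * e = g i := by
  have hsingle : HasSum (fun j => g i * g j) (g i * g i) :=
    hasSum_single i fun j hji => horth i j hji.symm
  rw [(hg i).eq] at hsingle
  exact (hsum.mul_left (g i)).unique hsingle

theorem mul_summand_eq_self (hsum : HasSum g e) (hg : ∀ i, IsIdempotentElem (g i))
    (horth : ∀ i j, i ≠ j → g i * g j = 0) (i : ι) : e * g i = g i := by
  have hsingle : HasSum (fun j => g j * g i) (g i * g i) :=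
    hasSum_single i fun j hji => horth j i hji
  rw [(hg i).eq] at hsingle
  exact (hsum.mul_right (g i)).unique hsingle

end HasSum

theorem strongly_isomorphic_idempotent_summands_general
    (R : Type*) [Ring R] [TopologicalSpace R] [IsTopologicalRing R] [T2Space R]
    {ι : Type*} (e e' : R)
    (h₂ : e * e' = e)
    (g : ι → R) (hg : ∀ i, IsIdempotentElem (g i))
    (horth : ∀ i j, i ≠ j → g i * g j = 0)
    (hsum : HasSum g e) :
    Summable (fun i => e' * g i) ∧
    (∀ i, IsIdempotentElem (e' * g i)) ∧
    (∀ i j, i ≠ j → (e' * g i) * (e' * g j) = 0) ∧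
    (∀ i, (e' * g i) * g i = e' * g i ∧ g i * (e' * g i) = g i) ∧
    (∀ u : R, e' = u * e → ∀ i, e' * g i = u * g i) ∧
    (∀ f : R, IsIdempotentElem f → e * f = 0 → f * e = 0 →
      ∀ i, f * g i = 0 ∧ g i * f = 0) := by
  have hge : ∀ i, g i * e = g i := hsum.summand_mul_eq_self hg horth
  have heg : ∀ i, e * g i = g i := hsum.mul_summand_eq_self hg horth
  have hge' : ∀ i, g i * e' = g i := fun i => by rw [← hge i, mul_assoc, h₂]
  refine ⟨(hsum.mul_left e').summable, fun i => (hg i).mul_left_of_mul_eq_self (hge' i),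
    fun i j hij => ?_, fun i => ⟨?_, ?_⟩, fun u hu i => ?_, fun f _ hef hfe i => ⟨?_, ?_⟩⟩
  · rw [mul_mul_mul_eq_of_mul_eq_self (hge' i), horth i j hij, mul_zero]
  · rw [mul_assoc, (hg i).eq]
  · rw [← mul_assoc, hge' i, (hg i).eq]
  · rw [hu, mul_assoc, heg i]
  · rw [← heg i, ← mul_assoc, hfe, zero_mul]
  · rw [← hge i, mul_assoc, hef, mul_zero]

/-- Lemma 3. Let `e ∼ e'` be left strongly isomorphic idempotents in a
ring with a linear Hausdorff topology, and let `e = ∑ᵢ g i` with `(g i)` a summable family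
of pairwise orthogonal idempotents.  Then `(e' * g i)` is a summable family of pairwise
orthogonal idempotents with `g i ∼ e' * g i`; if `e' = u * e` then `e' * g i = u * g i`;
and any idempotent `f` orthogonal to `e` is orthogonal to each `g i`. -/
theorem strongly_isomorphic_idempotent_summands
    (R : Type*) [Ring R] [TopologicalSpace R] [IsTopologicalRing R] [T2Space R]
    (hlin : HasLinearTopology R)
    {ι : Type*} (e e' : R) (he : IsIdempotentElem e) (he' : IsIdempotentElem e')
    (h₁ : e' * e = e') (h₂ : e * e' = e)
    (g : ι → R) (hg : ∀ i, IsIdempotentElem (g i))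
    (horth : ∀ i j, i ≠ j → g i * g j = 0)
    (hsum : HasSum g e) :
    Summable (fun i => e' * g i) ∧
    (∀ i, IsIdempotentElem (e' * g i)) ∧
    (∀ i j, i ≠ j → (e' * g i) * (e' * g j) = 0) ∧
    (∀ i, (e' * g i) * g i = e' * g i ∧ g i * (e' * g i) = g i) ∧
    (∀ u : R, e' = u * e → ∀ i, e' * g i = u * g i) ∧
    (∀ f : R, IsIdempotentElem f → e * f = 0 → f * e = 0 →
      ∀ i, f * g i = 0 ∧ g i * f = 0) :=
  strongly_isomorphic_idempotent_summands_general R e e' h₂ g hg horth hsum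
end

section
/- Let (e_i)_{i∈I} be a summable family of idempotents in a ring R with a linear, Hausdorff topology, where I is well-ordered. Suppose e_i e_j ∈ J(R) whenever i < j, and that ∑_{i∈I} e_i = u is a unit of R. Then (u⁻¹e_i)_{i∈I} is a family of pairwise orthogonal idempotents with ∑_{i∈I} u⁻¹e_i = 1. -/
/-- The Jacobson radical of a (possibly noncommutative) ring, as the intersection of the
maximal left ideals. -/
def jacobsonRad (R : Type*) [Ring R] : Ideal R := Ideal.jacobson ⊥
/-!
Put `v = u⁻¹` and `D p q = e p * v * e q - δ_pq e p`; the claim is that `D = 0`. The columns of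
`D` sum to `0`, `e p * D p q = D p q` and `∑ₖ D p k * D k q = -D p q`. A well-founded induction
on `p`, using `e p * e k ∈ J(R)` for `p < k`, puts every entry of `D` in the closure of `J(R)`.
Modulo an open left ideal `L`, all but finitely many entries of a column of `D` lie in `L`, and the
last identity becomes a finite linear system for the others with coefficients in `J(R)`; Nakayama's
lemma then puts the whole column in `L`. The open left ideals intersect in `0`, hence `D = 0`.
-/

open Filter Topology Finset

theorem mem_of_hasSum_zero_of_forall_ne_mem {α β S : Type*} [AddCommGroup α]
    [TopologicalSpace α] [IsTopologicalAddGroup α] [SetLike S α] [AddSubgroupClass S α] {s : S}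
    (hs : IsClosed (s : Set α)) {f : β → α} (hf : HasSum f 0) (i : β)
    (h : ∀ k ≠ i, f k ∈ s) : f i ∈ s := by
  classical
  have hrest : HasSum (Function.update f i 0) (-f i) := by
    simpa using hf.update i 0
  have hneg : -f i ∈ s := hs.mem_of_tendsto hrest <| Eventually.of_forall fun F =>
    sum_mem fun k _ => by
      rcases eq_or_ne k i with rfl | hk
      · simp
      · simpa [hk] using h k hk
  simpa using neg_mem hneg

theorem mem_of_add_sum_jacobson_smul_mem {R M ι : Type*} [Ring R] [AddCommGroup M]
    [Module R M] {N : Submodule R M} {S : Finset ι} {x : ι → M} {c : ι → ι → R}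
    (hc : ∀ p k, c p k ∈ Ring.jacobson R)
    (h : ∀ p ∈ S, x p + ∑ k ∈ S, c p k • x k ∈ N) : ∀ p ∈ S, x p ∈ N := by
  set P : Submodule R (M ⧸ N) := Submodule.span R ((fun k => N.mkQ (x k)) '' S)
  have hgen : ∀ p ∈ S, N.mkQ (x p) ∈ P := fun p hp => Submodule.subset_span ⟨p, hp, rfl⟩
  have hP : P ≤ Ring.jacobson R • P := by
    refine Submodule.span_le.mpr ?_
    rintro _ ⟨p, hp, rfl⟩
    have hrel : N.mkQ (x p) = -∑ k ∈ S, c p k • N.mkQ (x k) := by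
      rw [eq_neg_iff_add_eq_zero]
      have h0 : N.mkQ (x p + ∑ k ∈ S, c p k • x k) = 0 :=
        (Submodule.Quotient.mk_eq_zero N).mpr (h p hp)
      simpa only [map_add, map_sum, map_smul] using h0
    change N.mkQ (x p) ∈ _
    rw [hrel]
    exact neg_mem (sum_mem fun k hk => Submodule.smul_mem_smul (hc p k) (hgen k hk))
  have hP0 : P = ⊥ :=
    (Submodule.fg_span (S.finite_toSet.image _)).eq_bot_of_le_jacobson_smul hP
  intro p hp
  simpa [hP0] using hgen p hp

theorem eq_zero_of_forall_mem_ideal_of_mem_nhds {R : Type*} [Ring R] [TopologicalSpace R]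
    (hlin : HasLinearTopology R) [T1Space R] {x : R}
    (h : ∀ L : Ideal R, (L : Set R) ∈ 𝓝 0 → x ∈ L) : x = 0 := by
  by_contra hx
  obtain ⟨L, hL, hLx⟩ := hlin _ (isOpen_compl_singleton.mem_nhds (Ne.symm hx))
  exact hLx (h L hL) rfl

section TopologicalRing

variable {R : Type*} [Ring R] [TopologicalSpace R] [IsTopologicalRing R]

theorem exists_mem_sub_mul_mem_of_mem_closure {s : Set R} {c : R} (hc : c ∈ closure s) (y : R)
    {U : Set R} (hU : U ∈ 𝓝 0) : ∃ j ∈ s, (c - j) * y ∈ U := by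
  have hcont : Continuous fun r : R => (c - r) * y := by fun_prop
  obtain ⟨j, hjU, hjs⟩ := mem_closure_iff_nhds.mp hc _
    (hcont.continuousAt.preimage_mem_nhds (by simpa using hU))
  exact ⟨j, hjs, hjU⟩

variable {ι : Type*}

theorem mem_of_hasSum_mul_eq_neg {D : ι → ι → R}
    (hD : ∀ p k, D p k ∈ closure (Ring.jacobson R : Set R)) {x : ι → R} (hx : Summable x)
    (hrel : ∀ p, HasSum (fun k => D p k * x k) (-x p)) {L : Ideal R} (hL : (L : Set R) ∈ 𝓝 0)
    (p : ι) : x p ∈ L := by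
  classical
  have hfin : {k | x k ∉ L}.Finite := mem_cofinite.mp (hx.tendsto_cofinite_zero hL)
  set S := hfin.toFinset
  have hS : ∀ k ∉ S, x k ∈ L := by simp [S]
  choose c hcJ hc using fun p k => exists_mem_sub_mul_mem_of_mem_closure (hD p k) (x k) hL
  by_cases hp : p ∉ S
  · exact hS p hp
  refine mem_of_add_sum_jacobson_smul_mem hcJ (fun p _ => ?_) p (not_not.mp hp)
  obtain ⟨F, hSF, hF⟩ : ∃ F : Finset ι, S ⊆ F ∧ ∑ k ∈ F, D p k * x k - -x p ∈ L :=
    ((eventually_ge_atTop S).and (tendsto_sub_nhds_zero_iff.mpr (hrel p) hL)).exists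
  have hout : ∑ k ∈ F \ S, D p k * x k ∈ L :=
    sum_mem fun k hk => L.mul_mem_left _ (hS k (mem_sdiff.mp hk).2)
  have hin : ∑ k ∈ S, (D p k - c p k) * x k ∈ L := sum_mem fun k _ => hc p k
  have hsplit : x p + ∑ k ∈ S, c p k • x k = (∑ k ∈ F, D p k * x k - -x p)
      - ∑ k ∈ F \ S, D p k * x k - ∑ k ∈ S, (D p k - c p k) * x k := by
    rw [← sum_sdiff hSF]
    simp only [smul_eq_mul, sub_mul, sum_sub_distrib]
    abel
  rw [hsplit]
  exact sub_mem (sub_mem hF hout) hin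

theorem mem_closure_of_hasSum_col_eq_zero [LinearOrder ι] [WellFoundedLT ι] (I : Ideal R)
    [I.IsTwoSided] {e : ι → R} (he : ∀ i k, i < k → e i * e k ∈ I) {D : ι → ι → R}
    (hD : ∀ k j, e k * D k j = D k j) (hcol : ∀ j, HasSum (fun k => D k j) 0) (i j : ι) :
    D i j ∈ closure (I : Set R) := by
  induction i using WellFoundedLT.induction with
  | ind i IH =>
  rw [← hD, ← Submodule.topologicalClosure_coe]
  refine mem_of_hasSum_zero_of_forall_ne_mem I.isClosed_topologicalClosure
    (by simpa using (hcol j).mul_left (e i)) i fun k hk => ?_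
  rcases hk.lt_or_gt with hki | hik
  · refine Ideal.mul_mem_left I.topologicalClosure _ ?_
    rw [← SetLike.mem_coe, Submodule.topologicalClosure_coe]
    exact IH k hki
  · rw [← hD k j, ← mul_assoc]
    exact I.le_topologicalClosure (I.mul_mem_right _ (he i k hik))

end TopologicalRing

section SandwichDefect

variable {R ι : Type*} [Ring R] [DecidableEq ι] (e : ι → R) (v : R)

def sandwichDefect (p q : ι) : R := e p * v * e q - if p = q then e p else 0

theorem mul_sandwichDefect {p : ι} (he : IsIdempotentElem (e p)) (q : ι) :
    e p * sandwichDefect e v p q = sandwichDefect e v p q := by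
  simp only [sandwichDefect, mul_sub, ← mul_assoc, he.eq]
  split_ifs <;> simp [he.eq]

variable [TopologicalSpace R] [IsTopologicalRing R] {u : R}

theorem hasSum_sandwichDefect_col (hsum : HasSum e u) (hu : u * v = 1) (q : ι) :
    HasSum (fun k => sandwichDefect e v k q) 0 := by
  have hv : HasSum (fun k => e k * v * e q) (e q) := by
    simpa [mul_assoc, ← mul_assoc u, hu] using hsum.mul_right (v * e q)
  have hfun : (fun k => sandwichDefect e v k q) =
      fun k => e k * v * e q - if k = q then e q else 0 := by
    funext k
    by_cases hkq : k = q <;> simp [sandwichDefect, hkq]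
  have h := hv.sub (hasSum_ite_eq q (e q))
  rwa [sub_self, ← hfun] at h

theorem hasSum_sandwichDefect_mul (hidem : ∀ i, IsIdempotentElem (e i)) (hsum : HasSum e u)
    (hu : u * v = 1) (p q : ι) :
    HasSum (fun k => sandwichDefect e v p k * sandwichDefect e v k q)
      (-sandwichDefect e v p q) := by
  have hcol := hasSum_sandwichDefect_col e v hsum hu q
  have hdiag : HasSum (fun k => (if p = k then e p else 0) * sandwichDefect e v k q)
      (sandwichDefect e v p q) := by
    convert hasSum_ite_eq p (sandwichDefect e v p q) using 2 with k
    rcases eq_or_ne k p with rfl | hkp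
    · simp [mul_sandwichDefect e v (hidem k)]
    · simp [hkp, hkp.symm]
  have hrow : HasSum (fun k => e p * v * sandwichDefect e v k q) 0 := by
    simpa using hcol.mul_left (e p * v)
  have hfun : (fun k => sandwichDefect e v p k * sandwichDefect e v k q) =
      fun k => e p * v * sandwichDefect e v k q
        - (if p = k then e p else 0) * sandwichDefect e v k q := by
    funext k
    rw [sandwichDefect, sub_mul, mul_assoc (e p * v), mul_sandwichDefect e v (hidem k)]
  rw [hfun, ← zero_sub]
  exact hrow.sub hdiag

end SandwichDefect

/-- Lemma 4. Let `(e i)` be a summable family of idempotents, indexed by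
a well-ordered set, in a ring with a linear Hausdorff topology.  If `e i * e j ∈ J(R)` for
`i < j` and `∑ᵢ e i = u` is a unit, then `(u⁻¹ * e i)` is a family of pairwise orthogonal
idempotents summing to `1`. -/
theorem almost_orthogonal_idempotents_unit_sum
    (R : Type*) [Ring R] [TopologicalSpace R] [IsTopologicalRing R] [T2Space R]
    (hlin : HasLinearTopology R)
    {ι : Type*} [LinearOrder ι] [WellFoundedLT ι]
    (e : ι → R) (hidem : ∀ i, IsIdempotentElem (e i))
    (hJ : ∀ i j : ι, i < j → e i * e j ∈ jacobsonRad R)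
    (u : Rˣ) (hsum : HasSum e (u : R)) :
    (∀ i, IsIdempotentElem ((↑u⁻¹ : R) * e i)) ∧
    (∀ i j, i ≠ j → ((↑u⁻¹ : R) * e i) * ((↑u⁻¹ : R) * e j) = 0) ∧
    HasSum (fun i => (↑u⁻¹ : R) * e i) 1 := by
  set v : R := ↑u⁻¹
  have hJ' : ∀ i j, i < j → e i * e j ∈ Ring.jacobson R := by
    simpa only [jacobsonRad, Ideal.jacobson_bot] using hJ
  have hcol := hasSum_sandwichDefect_col e v hsum u.mul_inv
  have hclosure : ∀ p q, sandwichDefect e v p q ∈ closure (Ring.jacobson R : Set R) :=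
    mem_closure_of_hasSum_col_eq_zero _ hJ' (fun p => mul_sandwichDefect e v (hidem p)) hcol
  have hzero : ∀ p q, sandwichDefect e v p q = 0 := fun p q =>
    eq_zero_of_forall_mem_ideal_of_mem_nhds hlin fun L hL =>
      mem_of_hasSum_mul_eq_neg hclosure (hcol q).summable
        (fun p => hasSum_sandwichDefect_mul e v hidem hsum u.mul_inv p q) hL p
  have hmul : ∀ p q, v * e p * (v * e q) = if p = q then v * e p else 0 := by
    intro p q
    rw [mul_assoc, ← mul_assoc (e p), sub_eq_zero.mp (hzero p q)]
    split_ifs <;> simp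
  refine ⟨fun i => by simpa [IsIdempotentElem] using hmul i i,
    fun i j hij => by simpa [hij] using hmul i j, ?_⟩
  simpa [v] using hsum.mul_left v
end

section
/- Let (e_i)_{i∈I} be a summable family of idempotents in a ring R with a linear, Hausdorff topology, where I is well-ordered. Put e = ∑_{i∈I} e_i and suppose e_i e_j = 0 whenever i < j. If eⁿr = 0 for some r ∈ R and some integer n ≥ 1, then e_i r = 0 for all i ∈ I; in particular, er = 0. -/
/-!
If `fⱼ x = 0` for all `j < i`, then triangularity and `fᵢ² = fᵢ` kill every term of
`fᵢ e x = ∑ⱼ fᵢ fⱼ x` except `fᵢ x`, so `fᵢ e x = fᵢ x`. Hence, by well-founded induction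
on `i`, every `fᵢ` that annihilates `e x` annihilates `x`; by induction on `n`, every `fᵢ`
annihilates `x` as soon as `eⁿ x = 0`. Finally `e r = ∑ᵢ fᵢ r = 0`.
-/

section TriangularIdempotents

variable {R : Type*} [Semiring R] [TopologicalSpace R] [IsTopologicalSemiring R] [T2Space R]
  {ι : Type*} [LinearOrder ι] {f : ι → R} {e : R}

theorem mul_hasSum_mul_eq_of_forall_lt_mul_eq_zero {i : ι} (hidem : IsIdempotentElem (f i))
    (horth : ∀ j, i < j → f i * f j = 0) (hsum : HasSum f e) {x : R}
    (hx : ∀ j < i, f j * x = 0) : f i * (e * x) = f i * x := by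
  have hterms : (fun j => f i * f j * x) = fun j => if j = i then f i * x else 0 := by
    funext j
    rcases lt_trichotomy j i with hji | rfl | hij
    · rw [if_neg hji.ne, mul_assoc, hx j hji, mul_zero]
    · rw [if_pos rfl, hidem]
    · rw [if_neg hij.ne', horth j hij, zero_mul]
  have h := (hsum.mul_left (f i)).mul_right x
  rw [hterms] at h
  rw [← mul_assoc, h.unique (hasSum_ite_eq i _)]

variable [WellFoundedLT ι] (hidem : ∀ i, IsIdempotentElem (f i))
  (horth : ∀ i j : ι, i < j → f i * f j = 0) (hsum : HasSum f e)
include hidem horth hsum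

theorem forall_mul_eq_zero_of_forall_mul_hasSum_mul_eq_zero {x : R}
    (hx : ∀ i, f i * (e * x) = 0) (i : ι) : f i * x = 0 := by
  induction i using WellFoundedLT.induction with
  | _ i ih =>
    rw [← mul_hasSum_mul_eq_of_forall_lt_mul_eq_zero (hidem i) (horth i) hsum ih, hx]

theorem forall_mul_eq_zero_of_hasSum_pow_mul_eq_zero {n : ℕ} {x : R} (hx : e ^ n * x = 0) (i : ι) :
    f i * x = 0 := by
  induction n generalizing x i with
  | zero => rw [← one_mul x, ← pow_zero e, hx, mul_zero]
  | succ n ih =>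
    refine forall_mul_eq_zero_of_forall_mul_hasSum_mul_eq_zero hidem horth hsum (fun j => ?_) i
    exact ih (by rwa [← mul_assoc, ← pow_succ]) j

end TriangularIdempotents

theorem triangular_idempotents_power_annihilates_general
    (R : Type*) [Ring R] [TopologicalSpace R] [IsTopologicalRing R] [T2Space R]
    {ι : Type*} [LinearOrder ι] [WellFoundedLT ι]
    (f : ι → R) (hidem : ∀ i, IsIdempotentElem (f i))
    (horth : ∀ i j : ι, i < j → f i * f j = 0)
    (e : R) (hsum : HasSum f e)
    (r : R) (n : ℕ) (h : e ^ n * r = 0) :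
    (∀ i, f i * r = 0) ∧ e * r = 0 := by
  have hfr := forall_mul_eq_zero_of_hasSum_pow_mul_eq_zero hidem horth hsum h
  refine ⟨hfr, (hsum.mul_right r).unique ?_⟩
  simpa only [hfr] using hasSum_zero

/-- Lemma 5. Let `(f i)` be a summable family of idempotents, indexed by
a well-ordered set, in a ring with a linear Hausdorff topology, with `e = ∑ᵢ f i` and
`f i * f j = 0` for `i < j`.  If `eⁿ * r = 0` for some `n ≥ 1`, then `f i * r = 0` for all
`i`; in particular `e * r = 0`. -/
theorem triangular_idempotents_power_annihilates
    (R : Type*) [Ring R] [TopologicalSpace R] [IsTopologicalRing R] [T2Space R]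
    (hlin : HasLinearTopology R)
    {ι : Type*} [LinearOrder ι] [WellFoundedLT ι]
    (f : ι → R) (hidem : ∀ i, IsIdempotentElem (f i))
    (horth : ∀ i j : ι, i < j → f i * f j = 0)
    (e : R) (hsum : HasSum f e)
    (r : R) (n : ℕ) (hn : 1 ≤ n) (h : e ^ n * r = 0) :
    (∀ i, f i * r = 0) ∧ e * r = 0 :=
  triangular_idempotents_power_annihilates_general R f hidem horth e hsum r n h
end

section
/- Let R be an exchange (suitable) ring equipped with a linear, Hausdorff ring topology. Then the Jacobson radical J(R) is a closed subset of R. -/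
lemma mem_of_one_sub_mul_mem_of_mem_jacobsonRad {R : Type*} [Ring R] {I : Ideal R} {x e : R}
    (hx : x ∈ jacobsonRad R) (h : (1 - x) * e ∈ I) : e ∈ I := by
  obtain ⟨u, hu⟩ := Ideal.exists_mul_sub_mem_of_sub_one_mem_jacobson (1 - x)
    (by rw [sub_sub_cancel_left]; exact neg_mem hx)
  rw [Ideal.mem_bot, sub_eq_zero] at hu
  simpa [← mul_assoc, hu] using I.mul_mem_left u h

lemma IsSuitableRing.exists_isIdempotentElem_ne_zero_of_not_mem_jacobsonRad {R : Type*} [Ring R]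
    (hR : IsSuitableRing R) {z : R} (hz : z ∉ jacobsonRad R) :
    ∃ e, IsIdempotentElem e ∧ e ≠ 0 ∧ ∃ t, e = t * z := by
  obtain ⟨M, ⟨-, hM⟩, hzM⟩ : ∃ M : Ideal R, (⊥ ≤ M ∧ M.IsMaximal) ∧ z ∉ M := by
    simpa [jacobsonRad, Ideal.jacobson, Submodule.mem_sInf] using hz
  obtain ⟨a, m, hm, hazm⟩ := hM.exists_inv hzM
  obtain ⟨e, f, he, -, ⟨r, rfl⟩, ⟨s, rfl⟩, -, -, hef⟩ := hR (a * z) m hazm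
  refine ⟨_, he, fun he0 => hM.ne_top ?_, r * a, (mul_assoc r a z).symm⟩
  rw [he0, zero_add] at hef
  exact M.eq_top_iff_one.2 (hef ▸ M.mul_mem_left s hm)

lemma mem_of_isIdempotentElem_of_mem_closure_jacobsonRad {R : Type*} [Ring R]
    [TopologicalSpace R] [IsTopologicalRing R] {z t : R} (hz : z ∈ closure (jacobsonRad R : Set R))
    (he : IsIdempotentElem (t * z)) {I : Ideal R} (hI : (I : Set R) ∈ nhds 0) : t * z ∈ I := by
  have hcont : Continuous fun x => t * (z - x) * (t * z) := by fun_prop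
  have hnhds : (fun x => t * (z - x) * (t * z)) ⁻¹' I ∈ nhds z :=
    hcont.continuousAt.preimage_mem_nhds (by simpa using hI)
  obtain ⟨j, hjI, hjJ⟩ := mem_closure_iff_nhds.1 hz _ hnhds
  refine mem_of_one_sub_mul_mem_of_mem_jacobsonRad ((jacobsonRad R).mul_mem_left t hjJ) ?_
  have hsmall : (1 - t * j) * (t * z) = t * (z - j) * (t * z) :=
    calc (1 - t * j) * (t * z) = t * z * (t * z) - t * j * (t * z) := by rw [he.eq]; noncomm_ring
      _ = t * (z - j) * (t * z) := by noncomm_ring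
  rw [hsmall]
  exact hjI

lemma eq_zero_of_forall_mem_of_hasLinearTopology {R : Type*} [Ring R] [TopologicalSpace R]
    [T1Space R] (hlin : HasLinearTopology R) {e : R}
    (he : ∀ I : Ideal R, (I : Set R) ∈ nhds 0 → e ∈ I) : e = 0 := by
  by_contra he0
  obtain ⟨I, hI, hIe⟩ := hlin {e}ᶜ (isOpen_compl_singleton.mem_nhds (Ne.symm he0))
  exact hIe (he I hI) rfl

/-- Lemma 6. In an exchange (suitable) ring with a linear Hausdorff
ring topology, the Jacobson radical is closed. -/
theorem suitable_linear_hausdorff_jacobson_closed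
    (R : Type*) [Ring R] [TopologicalSpace R] [IsTopologicalRing R] [T2Space R]
    (hlin : HasLinearTopology R) (hsuit : IsSuitableRing R) :
    IsClosed ((jacobsonRad R : Ideal R) : Set R) := by
  refine isClosed_of_closure_subset fun z hz => ?_
  by_contra hzJ
  obtain ⟨_, he, he0, t, rfl⟩ :=
    hsuit.exists_isIdempotentElem_ne_zero_of_not_mem_jacobsonRad hzJ
  exact he0 (eq_zero_of_forall_mem_of_hasLinearTopology hlin fun I hI =>
    mem_of_isIdempotentElem_of_mem_closure_jacobsonRad hz he hI)
end

section
/- Let R be a suitable ring and put R̄ = R/J(R). If x ∈ R and ε ∈ R̄x̄ is an idempotent of R̄ (where x̄ denotes the image of x in R̄), then there is an idempotent e ∈ Rx whose image in R̄ equals ε. -/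
/-- The Jacobson radical is closed under right multiplication. -/
lemma jacobsonRad_mul_mem_right {R : Type*} [Ring R] {u : R}
    (h : u ∈ jacobsonRad R) (v : R) : u * v ∈ jacobsonRad R := by
  unfold jacobsonRad at h ⊢
  exact Ideal.mul_mem_right v _ h

/-- Lemma 7. Let `R` be suitable and `R̄ = R/J(R)`.  If `ε ∈ R̄x̄` is an
idempotent of `R̄` — i.e. `a : R` is idempotent modulo `J(R)` and lies in `Rx` modulo
`J(R)` — then there is an idempotent `e ∈ Rx` of `R` whose image in `R̄` is `ε`, i.e.
`e ≡ a mod J(R)`. -/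
theorem suitable_lift_idempotent_in_principal_left_ideal
    (R : Type*) [Ring R] (hsuit : IsSuitableRing R) (x a : R)
    (hidem : a * a - a ∈ jacobsonRad R)
    (hmem : ∃ r : R, a - r * x ∈ jacobsonRad R) :
    ∃ e : R, IsIdempotentElem e ∧ (∃ s : R, e = s * x) ∧ e - a ∈ jacobsonRad R := by
  obtain ⟨r, hj⟩ := hmem
  set J := jacobsonRad R with hJ
  set b := r * x with hb
  set j := a - b with hjdef
  -- b * b - b ∈ J
  have hk : b * b - b ∈ J := by
    have hexp : b * b - b = (a * a - a) + (-(a * j) + (-(j * a) + (j * j + j))) := by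
      rw [hjdef]; noncomm_ring
    rw [hexp]
    exact add_mem hidem (add_mem (neg_mem (Ideal.mul_mem_left _ a hj))
      (add_mem (neg_mem (jacobsonRad_mul_mem_right hj a))
        (add_mem (Ideal.mul_mem_left _ j hj) hj)))
  obtain ⟨e, f, he, hf, ⟨r₁, hr₁⟩, ⟨s₁, hs₁⟩, hef, hfe, hefsum⟩ :=
    hsuit (b * b) (1 - b * b) (by noncomm_ring)
  refine ⟨e, he, ⟨r₁ * b * r, by rw [hr₁, hb]; noncomm_ring⟩, ?_⟩
  have hrel : (1 : R) - e = s₁ * (1 - b * b) := by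
    rw [← hs₁, ← hefsum]; abel
  set k := b * b - b with hkdef
  have h1 : e - e * b ∈ J := by
    have : e - e * b = -((r₁ * b) * k) := by rw [hr₁, hkdef]; noncomm_ring
    rw [this]; exact neg_mem (Ideal.mul_mem_left _ _ hk)
  have h2 : e * b - e * (b * b) ∈ J := by
    have : e * b - e * (b * b) = -(e * k) := by rw [hkdef]; noncomm_ring
    rw [this]; exact neg_mem (Ideal.mul_mem_left _ _ hk)
  have h3 : e * (b * b) - b * b ∈ J := by
    have : e * (b * b) - b * b = -((1 - e) * (b * b)) := by noncomm_ring
    rw [this, hrel]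
    have : s₁ * (1 - b * b) * (b * b) = -((s₁ * (b * b)) * k + s₁ * (k * b)) := by
      rw [hkdef]; noncomm_ring
    rw [this, neg_neg]
    exact add_mem (Ideal.mul_mem_left _ _ hk)
      (Ideal.mul_mem_left _ _ (jacobsonRad_mul_mem_right hk b))
  have h5 : b - a ∈ J := by
    have : b - a = -j := by rw [hjdef]; abel
    rw [this]; exact neg_mem hj
  have hsplit : e - a = (e - e * b) + (e * b - e * (b * b)) + (e * (b * b) - b * b)
      + (b * b - b) + (b - a) := by abel
  rw [hsplit]
  exact add_mem (add_mem (add_mem (add_mem h1 h2) h3) hk) h5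
end

section
/- Let M be a right k-module and E = End(M) its endomorphism ring. If every left non-zero-divisor of E is a unit of E (i.e., the right module E_E is cohopfian), then M is a cohopfian module. If the right module E_E has property (C₂) (every right ideal of E isomorphic as a right E-module to a direct summand of E_E is itself a direct summand), then M has property (C₂). -/
/-- A module is *cohopfian* if every injective endomorphism is an isomorphism. -/
def ModuleCohopfian (k M : Type*) [Ring k] [AddCommGroup M] [Module k M] : Prop :=
  ∀ f : M →ₗ[k] M, Function.Injective f → Function.Bijective f
/-- A module has property (C₂) if every submodule isomorphic to a direct summand of `M`
is itself a direct summand of `M`. -/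
def ModuleC2 (k M : Type*) [Ring k] [AddCommGroup M] [Module k M] : Prop :=
  ∀ N N' : Submodule k M, (∃ C, IsCompl N' C) → Nonempty (N ≃ₗ[k] N') →
    ∃ C, IsCompl N C
/-- The right regular module `R_R` has property (C₂): every right ideal of `R` which is
isomorphic as a right `R`-module to a direct summand of `R_R` is itself a direct summand.
Right ideals of `R` are formalized as submodules of `R` over the opposite ring `Rᵐᵒᵖ`. -/
def RightSelfC2 (R : Type*) [Ring R] : Prop :=
  ∀ I J : Submodule Rᵐᵒᵖ R, (∃ J', IsCompl J J') → Nonempty (I ≃ₗ[Rᵐᵒᵖ] J) →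
    ∃ I', IsCompl I I'

/-!
An injective `f` is a left non-zero-divisor of `End(M)`, so the first part is immediate.
For (C₂), a submodule `N` corresponds to the right ideal `Hom(M, N)` of `E = End(M)`:
complements `M = N ⊕ C` give complements `E = Hom(M, N) ⊕ Hom(M, C)`, and `N ≅ N'` gives
`Hom(M, N) ≅ Hom(M, N')` as right `E`-modules. So if `N ≅ N'` with `N'` a summand, (C₂) for `E_E`
makes `Hom(M, N) = gE` for an idempotent `g`, and `N = range g` because `N` is the image of
`M ↠ N' ≅ N`; the range of an idempotent is a summand.
-/

open MulOpposite

namespace Submodule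

variable {k M : Type*} [Ring k] [AddCommGroup M] [Module k M]

/-- `Hom(M, N)` as a right ideal of `End(M)`. -/
def homInto (N : Submodule k M) : Submodule (Module.End k M)ᵐᵒᵖ (Module.End k M) where
  carrier := {f | ∀ m, f m ∈ N}
  add_mem' hf hg m := N.add_mem (hf m) (hg m)
  zero_mem' _ := N.zero_mem
  smul_mem' _ _ hf _ := hf _

def homIntoMap {N N' : Submodule k M} (ψ : N →ₗ[k] N') :
    N.homInto →ₗ[(Module.End k M)ᵐᵒᵖ] N'.homInto where
  toFun f := ⟨N'.subtype ∘ₗ ψ ∘ₗ (f : Module.End k M).codRestrict N f.2, fun _ => (ψ _).2⟩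
  map_add' f g := by
    ext m
    change (ψ ⟨f.1 m + g.1 m, _⟩ : M) = ψ ⟨f.1 m, f.2 m⟩ + ψ ⟨g.1 m, g.2 m⟩
    rw [← N'.coe_add, ← map_add]
    rfl
  map_smul' r f := by ext; rfl

@[simp]
theorem homIntoMap_apply {N N' : Submodule k M} (ψ : N →ₗ[k] N') (f : N.homInto) (m : M) :
    (homIntoMap ψ f : Module.End k M) m = ψ ⟨f.1 m, f.2 m⟩ :=
  rfl

def homIntoCongr {N N' : Submodule k M} (φ : N ≃ₗ[k] N') :
    N.homInto ≃ₗ[(Module.End k M)ᵐᵒᵖ] N'.homInto :=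
  LinearEquiv.ofLinearMap (homIntoMap φ.toLinearMap) (homIntoMap φ.symm.toLinearMap)
    (by ext f m; simp) (by ext f m; simp)

theorem isCompl_homInto {N C : Submodule k M} (h : IsCompl N C) :
    IsCompl N.homInto C.homInto := by
  constructor
  · rw [disjoint_def]
    intro f hN hC
    ext m
    exact disjoint_def.mp h.disjoint _ (hN m) (hC m)
  · rw [codisjoint_iff_exists_add_eq]
    intro f
    refine ⟨N.projection C h ∘ₗ f, C.projection N h.symm ∘ₗ f,
      fun _ => projection_apply_mem h _, fun _ => projection_apply_mem h.symm _, ?_⟩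
    ext m
    exact projection_add_projection_eq_self h (f m)

/-- The left identity `e` is idempotent and `I = eR`. -/
theorem exists_mem_mul_eq_self_of_isCompl {R : Type*} [Ring R] {I J : Submodule Rᵐᵒᵖ R}
    (h : IsCompl I J) : ∃ e ∈ I, ∀ x ∈ I, e * x = x := by
  refine ⟨I.projection J h 1, projection_apply_mem h 1, fun x hx => ?_⟩
  calc I.projection J h 1 * x = I.projection J h (op x • 1) := by
        rw [map_smul, op_smul_eq_mul]
    _ = x := by rw [op_smul_eq_mul, one_mul, projection_apply_of_mem_left h hx]

theorem exists_range_eq_of_equiv_of_isCompl {N N' C : Submodule k M} (φ : N ≃ₗ[k] N')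
    (h : IsCompl N' C) : ∃ α : Module.End k M, LinearMap.range α = N := by
  refine ⟨N.subtype ∘ₗ φ.symm.toLinearMap ∘ₗ N'.projectionOnto C h, ?_⟩
  have hsurj : Function.Surjective (φ.symm.toLinearMap ∘ₗ N'.projectionOnto C h) :=
    φ.symm.surjective.comp (projectionOnto_surjective h)
  rw [LinearMap.range_comp_of_range_eq_top _ (LinearMap.range_eq_top.mpr hsurj), range_subtype]

theorem exists_isCompl_of_isCompl_homInto {N : Submodule k M}
    (hN : ∃ α : Module.End k M, LinearMap.range α = N) (h : ∃ I, IsCompl N.homInto I) :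
    ∃ C, IsCompl N C := by
  obtain ⟨α, rfl⟩ := hN
  obtain ⟨I, hI⟩ := h
  obtain ⟨g, hgN, hg⟩ := exists_mem_mul_eq_self_of_isCompl hI
  have hαN : α ∈ (LinearMap.range α).homInto := fun m => LinearMap.mem_range_self α m
  have hrange : LinearMap.range g = LinearMap.range α := by
    refine le_antisymm (by rintro _ ⟨m, rfl⟩; exact hgN m) ?_
    rw [← hg α hαN, Module.End.mul_eq_comp]
    exact LinearMap.range_comp_le_range α g
  exact ⟨LinearMap.ker g, hrange ▸ LinearMap.IsIdempotentElem.isCompl (hg g hgN)⟩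

end Submodule

/-- Lemma 8. Let `E = End(M)`.  If every left non-zero-divisor of `E` is
a unit (i.e. `E_E` is cohopfian), then `M` is cohopfian; and if `E_E` has property (C₂),
then `M` has property (C₂). -/
theorem end_cohopfian_c2_transfer
    (k M : Type*) [Ring k] [AddCommGroup M] [Module k M] :
    ((∀ w : Module.End k M, (∀ r : Module.End k M, w * r = 0 → r = 0) → IsUnit w) →
        ModuleCohopfian k M) ∧
      (RightSelfC2 (Module.End k M) → ModuleC2 k M) := by
  constructor
  · intro hE f hf
    have hf_nzd : ∀ r : Module.End k M, f * r = 0 → r = 0 := fun r hr =>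
      LinearMap.ext fun m => hf (by simpa using LinearMap.congr_fun hr m)
    exact (Module.End.isUnit_iff f).mp (hE f hf_nzd)
  · rintro hE N N' ⟨C, hC⟩ ⟨φ⟩
    exact Submodule.exists_isCompl_of_isCompl_homInto
      (Submodule.exists_range_eq_of_equiv_of_isCompl φ hC)
      (hE _ _ ⟨_, Submodule.isCompl_homInto hC⟩ ⟨Submodule.homIntoCongr φ⟩)
end
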